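/- arXiv:2604.04305 — 5 statements merged into one kernel-verified Lean document; each statement's English description precedes it below -/
import Mathlib

section
/- Let t ∈ ℝ and let γ ≥ 0 and λ ≥ 0 be real constants. Let p : ℝ → ℝ with p(t) ∈ [0,1]. Suppose there exist functions ε₁, ε₂ : ℝ → ℝ with ε₁(τ)/τ → 0 and ε₂(τ)/τ → 0 as τ → 0⁺, such that for all sufficiently small τ > 0 the Bayesian-update relation p(t+τ)·(1 − (1 − p(t))·λ·τ + ε₂(τ)) = p(t)·(1 − γ·τ) + ε₁(τ) holds. Then p has a right derivative at t (a derivative within the set [t,∞)) equal to −γ·p(t) + λ·p(t)·(1 − p(t)). -/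
/-!
Subtracting `p t` times the normalising factor `1 - (1 - p t) λ τ + ε₂ τ` from both sides of the
update relation and dividing by `τ` shows that the difference quotient of `p` at `t`, times that
factor, equals `-γ p t + λ p t (1 - p t) + o(1)`. Since the factor tends to `1`, the difference
quotient tends to `-γ p t + λ p t (1 - p t)`.
-/

open Filter Set Topology

theorem Filter.Tendsto.of_mul_eventuallyEq {α 𝕜 : Type*} [NormedField 𝕜] {l : Filter α}
    {f g h : α → 𝕜} {b c : 𝕜} (hg : Tendsto g l (𝓝 b)) (hb : b ≠ 0)
    (hh : Tendsto h l (𝓝 c)) (hfgh : ∀ᶠ x in l, f x * g x = h x) :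
    Tendsto f l (𝓝 (c / b)) := by
  refine (hh.div hg hb).congr' ?_
  filter_upwards [hfgh, hg.eventually_ne hb] with x hfghx hgx
  rw [Pi.div_apply, ← hfghx, mul_div_cancel_right₀ _ hgx]

theorem hasDerivWithinAt_Ici_iff_tendsto_slope_zero_right {F : Type*} [NormedAddCommGroup F]
    [NormedSpace ℝ F] {f : ℝ → F} {f' : F} {x : ℝ} :
    HasDerivWithinAt f f' (Ici x) x ↔
      Tendsto (fun τ ↦ τ⁻¹ • (f (x + τ) - f x)) (𝓝[>] 0) (𝓝 f') := by
  have : 𝓝[>] x = map (x + ·) (𝓝[>] 0) := by simp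
  rw [← hasDerivWithinAt_Ioi_iff_Ici, hasDerivWithinAt_iff_tendsto_slope' self_notMem_Ioi,
    this, tendsto_map'_iff]
  simp only [Function.comp_def, slope, vsub_eq_sub, add_sub_cancel_left]

theorem tendsto_zero_of_tendsto_div_self_nhdsGT {ε : ℝ → ℝ}
    (h : Tendsto (fun τ ↦ ε τ / τ) (𝓝[>] 0) (𝓝 0)) : Tendsto ε (𝓝[>] 0) (𝓝 0) := by
  have hε : ε =o[𝓝[>] 0] id := by
    rw [Asymptotics.isLittleO_iff_tendsto']
    · exact h
    · filter_upwards [self_mem_nhdsWithin] with τ hτ h0 using absurd h0 (ne_of_gt hτ)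
  exact hε.trans_tendsto (tendsto_id.mono_left nhdsWithin_le_nhds)

theorem bayes_update_slope_mul_eq {a x γ lam τ e₁ e₂ : ℝ} (hτ : τ ≠ 0)
    (h : x * (1 - (1 - a) * lam * τ + e₂) = a * (1 - γ * τ) + e₁) :
    τ⁻¹ * (x - a) * (1 - (1 - a) * lam * τ + e₂) =
      -γ * a + lam * a * (1 - a) + e₁ / τ - a * (e₂ / τ) := by
  field_simp
  linear_combination h

theorem belief_update_right_deriv_general
    (t γ lam : ℝ)
    (p : ℝ → ℝ)
    (ε₁ ε₂ : ℝ → ℝ)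
    (h₁ : Tendsto (fun τ => ε₁ τ / τ) (𝓝[>] (0 : ℝ)) (𝓝 0))
    (h₂ : Tendsto (fun τ => ε₂ τ / τ) (𝓝[>] (0 : ℝ)) (𝓝 0))
    (hB : ∀ᶠ τ in 𝓝[>] (0 : ℝ),
      p (t + τ) * (1 - (1 - p t) * lam * τ + ε₂ τ) = p t * (1 - γ * τ) + ε₁ τ) :
    HasDerivWithinAt p (-γ * p t + lam * p t * (1 - p t)) (Set.Ici t) t := by
  set L := -γ * p t + lam * p t * (1 - p t)
  have hτ : Tendsto (fun τ : ℝ ↦ τ) (𝓝[>] 0) (𝓝 0) := tendsto_id.mono_left nhdsWithin_le_nhds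
  have hD : Tendsto (fun τ ↦ 1 - (1 - p t) * lam * τ + ε₂ τ) (𝓝[>] 0) (𝓝 1) := by
    simpa using (tendsto_const_nhds.sub (tendsto_const_nhds.mul hτ)).add
      (tendsto_zero_of_tendsto_div_self_nhdsGT h₂)
  have hN : Tendsto (fun τ ↦ L + ε₁ τ / τ - p t * (ε₂ τ / τ)) (𝓝[>] 0) (𝓝 L) := by
    simpa using (tendsto_const_nhds.add h₁).sub (tendsto_const_nhds.mul h₂)
  have hslope : ∀ᶠ τ in 𝓝[>] (0 : ℝ),
      τ⁻¹ * (p (t + τ) - p t) * (1 - (1 - p t) * lam * τ + ε₂ τ) =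
        L + ε₁ τ / τ - p t * (ε₂ τ / τ) := by
    filter_upwards [hB, self_mem_nhdsWithin] with τ hBτ hτpos
    exact bayes_update_slope_mul_eq (ne_of_gt hτpos) hBτ
  rw [hasDerivWithinAt_Ici_iff_tendsto_slope_zero_right]
  simpa only [smul_eq_mul, div_one] using hD.of_mul_eventuallyEq one_ne_zero hN hslope

/-- Bayesian-update relation for the immunity belief implies the belief ODE
`p' = -γ p + λ p (1-p)` as a right derivative at `t`. -/
theorem belief_update_right_deriv
    (t γ lam : ℝ) (hγ : 0 ≤ γ) (hlam : 0 ≤ lam)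
    (p : ℝ → ℝ) (hp : p t ∈ Set.Icc (0 : ℝ) 1)
    (ε₁ ε₂ : ℝ → ℝ)
    (h₁ : Tendsto (fun τ => ε₁ τ / τ) (𝓝[>] (0 : ℝ)) (𝓝 0))
    (h₂ : Tendsto (fun τ => ε₂ τ / τ) (𝓝[>] (0 : ℝ)) (𝓝 0))
    (hB : ∀ᶠ τ in 𝓝[>] (0 : ℝ),
      p (t + τ) * (1 - (1 - p t) * lam * τ + ε₂ τ) = p t * (1 - γ * τ) + ε₁ τ) :
    HasDerivWithinAt p (-γ * p t + lam * p t * (1 - p t)) (Set.Ici t) t :=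
  belief_update_right_deriv_general t γ lam p ε₁ ε₂ h₁ h₂ hB
end

section
/- Let γ ≥ 0 and k ≥ 0 be real constants, and let p : ℝ → ℝ be differentiable with p′(t) = −γ·p(t) + k·p(t)·(1 − p(t)) for all t ≥ 0. If p(0) ∈ [0,1], then p(t) ∈ [0,1] for all t ≥ 0. -/
/-!
A solution can only leave `[0,1]` through `0` or `1`, and the vector field
`F q = -γ q + k q (1 - q)` points inward there: `F q ≤ 0` for `q ≥ 1`, while for `q < 0` it is
bounded below by a multiple `K q` of `q`, where `K` depends on a bound for `p` on a compact time
interval. The weight `exp (-K t)` turns `g' ≥ K g` into `(exp (-K t) g)' ≥ 0`, and a function that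
does not decrease while it is negative cannot become negative after starting nonnegative: after
its last zero before a negative value it would be monotone.
-/

open Set

theorem nonneg_on_Icc_of_deriv_nonneg_of_neg {h h' : ℝ → ℝ} {a b : ℝ}
    (hd : ∀ t ∈ Icc a b, HasDerivAt h (h' t) t) (hh' : ∀ t ∈ Icc a b, h t < 0 → 0 ≤ h' t)
    (ha : 0 ≤ h a) : ∀ t ∈ Icc a b, 0 ≤ h t := by
  intro T hT
  by_contra! hT_neg
  have hcont : ContinuousOn h (Icc a T) := fun t ht =>
    (hd t ⟨ht.1, ht.2.trans hT.2⟩).continuousAt.continuousWithinAt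
  set S := Icc a T ∩ h ⁻¹' Ici 0
  have hS : IsCompact S := isCompact_Icc.of_isClosed_subset
    (hcont.preimage_isClosed_of_isClosed isClosed_Icc isClosed_Ici) inter_subset_left
  set s := sSup S
  obtain ⟨⟨has, hsT⟩, hs_nonneg⟩ : s ∈ S := hS.sSup_mem ⟨a, left_mem_Icc.2 hT.1, ha⟩
  have hneg : ∀ t ∈ Ioc s T, h t < 0 := fun t ht => by
    by_contra! h0
    exact (le_csSup hS.bddAbove ⟨⟨has.trans ht.1.le, ht.2⟩, h0⟩).not_gt ht.1
  have hsub : Ioo s T ⊆ Icc a b := fun t ht => ⟨has.trans ht.1.le, ht.2.le.trans hT.2⟩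
  have hmono : MonotoneOn h (Icc s T) := by
    refine monotoneOn_of_hasDerivWithinAt_nonneg (f' := h') (convex_Icc s T)
      (hcont.mono (Icc_subset_Icc_left has)) (fun t ht => ?_) (fun t ht => ?_) <;>
      rw [interior_Icc] at ht
    · exact (hd t (hsub ht)).hasDerivWithinAt
    · exact hh' t (hsub ht) (hneg t (Ioo_subset_Ioc_self ht))
  exact hT_neg.not_ge (hs_nonneg.trans (hmono (left_mem_Icc.2 hsT) (right_mem_Icc.2 hsT) hsT))

theorem nonneg_on_Icc_of_mul_le_deriv_of_neg {g g' : ℝ → ℝ} {a b K : ℝ}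
    (hd : ∀ t ∈ Icc a b, HasDerivAt g (g' t) t) (hK : ∀ t ∈ Icc a b, g t < 0 → K * g t ≤ g' t)
    (ha : 0 ≤ g a) : ∀ t ∈ Icc a b, 0 ≤ g t := by
  have hweighted := nonneg_on_Icc_of_deriv_nonneg_of_neg (h := fun t => Real.exp (-K * t) * g t)
    (h' := fun t => Real.exp (-K * t) * (g' t - K * g t))
    (fun t ht => by
      refine (((hasDerivAt_id' t).const_mul (-K)).exp.mul (hd t ht)).congr_deriv ?_
      ring)
    (fun t ht hneg => mul_nonneg (Real.exp_pos _).le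
      (sub_nonneg.2 (hK t ht (neg_of_mul_neg_right hneg (Real.exp_pos _).le))))
    (mul_nonneg (Real.exp_pos _).le ha)
  exact fun t ht => nonneg_of_mul_nonneg_right (hweighted t ht) (Real.exp_pos _)

theorem mul_le_belief_field_of_neg {γ k M q : ℝ} (hγ : 0 ≤ γ) (hk : 0 ≤ k) (hq : q < 0)
    (hM : -M ≤ q) : k * (1 + M) * q ≤ -γ * q + k * q * (1 - q) := by
  nlinarith [mul_nonneg hγ (neg_nonneg.2 hq.le),
    mul_nonneg (mul_nonneg hk (neg_nonneg.2 hq.le)) (neg_le_iff_add_nonneg.1 hM)]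

theorem belief_field_nonpos_of_one_le {γ k q : ℝ} (hγ : 0 ≤ γ) (hk : 0 ≤ k) (hq : 1 ≤ q) :
    -γ * q + k * q * (1 - q) ≤ 0 := by
  nlinarith [mul_nonneg hγ (zero_le_one.trans hq),
    mul_nonneg (mul_nonneg hk (zero_le_one.trans hq)) (sub_nonneg.2 hq)]

/-- Forward invariance of `[0,1]` for the belief ODE `p' = -γp + kp(1-p)` with `γ, k ≥ 0`. -/
theorem belief_ode_invariance
    (γ k : ℝ) (hγ : 0 ≤ γ) (hk : 0 ≤ k) (p : ℝ → ℝ)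
    (hode : ∀ t : ℝ, 0 ≤ t → HasDerivAt p (-γ * p t + k * p t * (1 - p t)) t)
    (h0 : p 0 ∈ Set.Icc (0 : ℝ) 1) :
    ∀ t : ℝ, 0 ≤ t → p t ∈ Set.Icc (0 : ℝ) 1 := by
  intro T hT
  have hderiv : ∀ t ∈ Icc 0 T, HasDerivAt p (-γ * p t + k * p t * (1 - p t)) t :=
    fun t ht => hode t ht.1
  obtain ⟨M, hM⟩ := isCompact_Icc.exists_bound_of_continuousOn
    fun t ht => (hderiv t ht).continuousAt.continuousWithinAt
  have hT' : T ∈ Icc 0 T := right_mem_Icc.2 hT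
  constructor
  · exact nonneg_on_Icc_of_mul_le_deriv_of_neg hderiv
      (fun t ht hpt => mul_le_belief_field_of_neg hγ hk hpt (neg_le_of_abs_le (hM t ht))) h0.1 T hT'
  · refine sub_nonneg.1 (nonneg_on_Icc_of_mul_le_deriv_of_neg (K := 0)
      (fun t ht => (hderiv t ht).const_sub 1) (fun t ht hpt => ?_) (sub_nonneg.2 h0.2) T hT')
    rw [zero_mul, neg_nonneg]
    exact belief_field_nonpos_of_one_le hγ hk (sub_neg.1 hpt).le
end

section
/- Let γ > 0 and k > 0 be real constants, and let p : ℝ → ℝ be differentiable with p′(t) = −γ·p(t) + k·p(t)·(1 − p(t)) for all t ≥ 0. If p(0) ∈ (0,1], then p(t) converges to max(0, 1 − γ/k) as t → ∞. -/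
open Set Filter Topology Real

/-!
Zero is an equilibrium of the locally Lipschitz field `F`, so by uniqueness of solutions a
trajectory starting at a positive value never reaches it and stays positive. Then `u = 1 / p`
solves the linear equation `u' = (γ - k) u + k` (Bernoulli substitution). If `γ < k` this forces
`u → k / (k - γ)`, i.e. `p → 1 - γ / k`; otherwise `u' ≥ k`, so `u → ∞` and `p → 0`.
-/

theorem eqOn_const_of_hasDerivAt_of_apply_eq {E : Type*} [NormedAddCommGroup E]
    [NormedSpace ℝ E] {F : E → E} (hF : LocallyLipschitz F) {x₀ : E} (hx₀ : F x₀ = 0)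
    {p : ℝ → E} {a b : ℝ} (hp : ∀ t ∈ Icc a b, HasDerivAt p (F (p t)) t) (hb : p b = x₀) :
    EqOn p (fun _ ↦ x₀) (Icc a b) := by
  have hcont : ContinuousOn p (Icc a b) := fun t ht ↦ (hp t ht).continuousAt.continuousWithinAt
  set S := insert x₀ (p '' Icc a b)
  obtain ⟨K, hK⟩ : ∃ K, LipschitzOnWith K F S :=
    hF.locallyLipschitzOn.exists_lipschitzOnWith_of_compact
      ((isCompact_Icc.image_of_continuousOn hcont).insert x₀)
  refine ODE_solution_unique_of_mem_Icc_left (v := fun _ ↦ F) (s := fun _ ↦ S)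
    (fun _ _ ↦ hK) hcont (fun t ht ↦ (hp t (Ioc_subset_Icc_self ht)).hasDerivWithinAt)
    (fun t ht ↦ mem_insert_of_mem _ (mem_image_of_mem p (Ioc_subset_Icc_self ht)))
    continuousOn_const (fun t _ ↦ ?_) (fun _ _ ↦ mem_insert _ _) hb
  simpa [hx₀] using hasDerivWithinAt_const t (Iic t) x₀

theorem lt_of_hasDerivAt_of_lt_apply_zero {F : ℝ → ℝ} (hF : LocallyLipschitz F) {x₀ : ℝ}
    (hx₀ : F x₀ = 0) {p : ℝ → ℝ} (hp : ∀ t, 0 ≤ t → HasDerivAt p (F (p t)) t)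
    (h0 : x₀ < p 0) {t : ℝ} (ht : 0 ≤ t) : x₀ < p t := by
  by_contra! hpt
  have hcont : ContinuousOn p (Icc 0 t) := fun τ hτ ↦ (hp τ hτ.1).continuousAt.continuousWithinAt
  obtain ⟨s, hs, hps⟩ : x₀ ∈ p '' Icc 0 t := intermediate_value_Icc' ht hcont ⟨hpt, h0.le⟩
  exact h0.ne' (eqOn_const_of_hasDerivAt_of_apply_eq hF hx₀ (fun τ hτ ↦ hp τ hτ.1) hps
    (left_mem_Icc.2 hs.1))

theorem eq_add_mul_exp_of_hasDerivAt {u : ℝ → ℝ} {a b c : ℝ} (hc : a * c + b = 0)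
    (hu : ∀ t, 0 ≤ t → HasDerivAt u (a * u t + b) t) {t : ℝ} (ht : 0 ≤ t) :
    u t = c + (u 0 - c) * exp (a * t) := by
  set w : ℝ → ℝ := fun τ ↦ exp (-(a * τ)) * (u τ - c)
  have hw : ∀ τ, 0 ≤ τ → HasDerivAt w 0 τ := by
    intro τ hτ
    have hexp : HasDerivAt (fun τ ↦ exp (-(a * τ))) (exp (-(a * τ)) * -(a * 1)) τ :=
      ((hasDerivAt_id τ).const_mul a).neg.exp
    exact (hexp.mul ((hu τ hτ).sub_const c)).congr_deriv
      (by linear_combination exp (-(a * τ)) * hc)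
  have hwt : w t = w 0 :=
    constant_of_has_deriv_right_zero (fun τ hτ ↦ (hw τ hτ.1).continuousAt.continuousWithinAt)
      (fun τ hτ ↦ (hw τ hτ.1).hasDerivWithinAt) t (right_mem_Icc.2 ht)
  simp only [w, mul_zero, neg_zero, exp_zero, one_mul] at hwt
  rw [← hwt, mul_right_comm, ← exp_add, neg_add_cancel, exp_zero]
  ring

theorem tendsto_of_hasDerivAt_linear {u : ℝ → ℝ} {a b : ℝ} (ha : a < 0)
    (hu : ∀ t, 0 ≤ t → HasDerivAt u (a * u t + b) t) : Tendsto u atTop (𝓝 (-b / a)) := by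
  have hc : a * (-b / a) + b = 0 := by rw [mul_div_cancel₀ _ ha.ne]; ring
  have hexp : Tendsto (fun t ↦ exp (a * t)) atTop (𝓝 0) :=
    tendsto_exp_atBot.comp (tendsto_id.const_mul_atTop_of_neg ha)
  have hlim := tendsto_const_nhds (x := -b / a) |>.add (hexp.const_mul (u 0 - -b / a))
  rw [mul_zero, add_zero] at hlim
  refine hlim.congr' ?_
  filter_upwards [eventually_ge_atTop 0] with t ht
  exact (eq_add_mul_exp_of_hasDerivAt hc hu ht).symm

theorem tendsto_atTop_of_le_hasDerivAt {u u' : ℝ → ℝ} {b : ℝ} (hb : 0 < b)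
    (hu : ∀ t, 0 ≤ t → HasDerivAt u (u' t) t) (hbu : ∀ t, 0 ≤ t → b ≤ u' t) :
    Tendsto u atTop atTop := by
  have hgrowth : ∀ t, 0 ≤ t → b * (t - 0) ≤ u t - u 0 := fun t ht ↦
    (convex_Ici 0).mul_sub_le_image_sub_of_le_deriv
      (fun τ hτ ↦ (hu τ hτ).continuousAt.continuousWithinAt)
      (fun τ hτ ↦ (hu τ (interior_subset hτ)).differentiableAt.differentiableWithinAt)
      (fun τ hτ ↦ (hu τ (interior_subset hτ)).deriv ▸ hbu τ (interior_subset hτ))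
      0 self_mem_Ici t ht ht
  refine tendsto_atTop_mono' _ ?_
    (tendsto_atTop_add_const_left _ (u 0) (tendsto_id.const_mul_atTop hb))
  filter_upwards [eventually_ge_atTop 0] with t ht
  show u 0 + b * t ≤ u t
  linarith [hgrowth t ht]

theorem hasDerivAt_inv_of_logistic {γ k : ℝ} {p : ℝ → ℝ} {t : ℝ}
    (hp : HasDerivAt p (-γ * p t + k * p t * (1 - p t)) t) (hpt : p t ≠ 0) :
    HasDerivAt (fun τ ↦ (p τ)⁻¹) ((γ - k) * (p t)⁻¹ + k) t :=
  (hp.inv hpt).congr_deriv (by field_simp; ring)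

theorem belief_ode_asymptotics_general
    (γ k : ℝ) (hk : 0 < k) (p : ℝ → ℝ)
    (hode : ∀ t : ℝ, 0 ≤ t → HasDerivAt p (-γ * p t + k * p t * (1 - p t)) t)
    (h0 : p 0 ∈ Set.Ioc (0 : ℝ) 1) :
    Tendsto p atTop (𝓝 (max 0 (1 - γ / k))) := by
  have hF : LocallyLipschitz fun q : ℝ ↦ -γ * q + k * q * (1 - q) :=
    ContDiff.locallyLipschitz (𝕂 := ℝ) (by fun_prop)
  have hpos : ∀ t, 0 ≤ t → 0 < p t := fun t ht ↦
    lt_of_hasDerivAt_of_lt_apply_zero hF (by ring) hode h0.1 ht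
  have hu : ∀ t, 0 ≤ t → HasDerivAt (fun τ ↦ (p τ)⁻¹) ((γ - k) * (p t)⁻¹ + k) t :=
    fun t ht ↦ hasDerivAt_inv_of_logistic (hode t ht) (hpos t ht).ne'
  have hp_inv_inv : (fun t ↦ (p t)⁻¹⁻¹) = p := by simp only [inv_inv]
  rw [← hp_inv_inv]
  rcases lt_or_ge γ k with hγk | hkγ
  · have hlimit : max 0 (1 - γ / k) = (-k / (γ - k))⁻¹ := by
      rw [max_eq_right (by rw [sub_nonneg, div_le_one hk]; exact hγk.le)]
      field_simp
      ring
    rw [hlimit]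
    exact (tendsto_of_hasDerivAt_linear (sub_neg.2 hγk) hu).inv₀
      (div_ne_zero (neg_ne_zero.2 hk.ne') (sub_neg.2 hγk).ne)
  · have hlimit : max 0 (1 - γ / k) = 0 :=
      max_eq_left (by rw [sub_nonpos, le_div_iff₀ hk]; linarith)
    rw [hlimit]
    refine (tendsto_atTop_of_le_hasDerivAt hk hu fun t ht ↦ ?_).inv_tendsto_atTop
    have := mul_nonneg (sub_nonneg.2 hkγ) (inv_pos.2 (hpos t ht)).le
    linarith

/-- Starting from any `p(0) ∈ (0,1]`, the belief converges to `max(0, 1 - γ/k)` as `t → ∞`. -/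
theorem belief_ode_asymptotics
    (γ k : ℝ) (hγ : 0 < γ) (hk : 0 < k) (p : ℝ → ℝ)
    (hode : ∀ t : ℝ, 0 ≤ t → HasDerivAt p (-γ * p t + k * p t * (1 - p t)) t)
    (h0 : p 0 ∈ Set.Ioc (0 : ℝ) 1) :
    Tendsto p atTop (𝓝 (max 0 (1 - γ / k))) :=
  belief_ode_asymptotics_general γ k hk p hode h0
end

section
/- Let γ ≥ 0, β, c̄_I, ū_I, Ψ_D, δ, μ, α be real constants, let u_N : ℝ → ℝ be a function with maximal value ū_N attained at c̄_N, and let V_0, V_1, V_I : ℝ → ℝ be differentiable, with I : ℝ → ℝ given. Consider the m = 1 Lax–Friedrichs semi-discretization (h = 1, p_0 = 0, p_1 = 1, f_j = −γ·p_j, ghost conventions V_{−1} = 2V_0 − V_1 and V_2 = 2V_1 − V_0): V_j′ = −u_N(c_j*) + β·c̄_I·I·c_j*·(1 − p_j)·(V_j − V_I) − f_j·(V_{j+1} − V_{j−1})/2 − α·(V_{j+1} − 2V_j + V_{j−1})/2 for j = 0,1, and V_I′ = −ū_I + μ·(V_I − V_1) + δ·(V_I − Ψ_D), where c_j* maximizes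 c ↦ u_N(c) + β·c̄_I·I·c·(1 − p_j)·(V_I − V_j) + f(p_j)·(V_{j+1} − V_{j−1})/2 (with f(p_j) independent of c, so c_1* = c̄_N). Then this system is identical to the MFG-SIRSD value-function equations: V_0′ = −u_N(c_S*) + β·c̄_I·c_S*·I·(V_0 − V_I) with c_S* = argmax_c { u_N(c) + β·c̄_I·c·I·(V_I − V_0) }, V_1′ = −ū_N + γ·(V_1 − V_0), and V_I′ = −ū_I + μ·(V_I − V_1) + δ·(V_I − Ψ_D); in particular the Lax–Friedrichs diffusion terms vanish identically and the equivalence holds for every α. -/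
/-- For `m = 1` (`h = 1`, `p₀ = 0`, `p₁ = 1`, `f_j = -γ p_j`, ghost values
`V_{-1} = 2V₀ - V₁`, `V₂ = 2V₁ - V₀`), the Lax–Friedrichs semi-discretization of the
value-function PDE is exactly the MFG-SIRSD value-function ODE system, for every `α`:
the diffusion terms vanish identically, `c₀*` maximizes the MFG-SIRSD objective for
susceptibles, `u_N(c₁*) = ū_N`, and the two systems of equations are equivalent. -/
theorem lax_friedrichs_m1_eq_mfg_sirsd
    (γ β cbarI ubarI ΨD δ μ α : ℝ) (hγ : 0 ≤ γ)
    (uN : ℝ → ℝ) (ubarN cbarN : ℝ)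
    (hattain : uN cbarN = ubarN) (hmax : ∀ c : ℝ, uN c ≤ ubarN)
    (V0 V1 VI I : ℝ → ℝ) (c0 c1 : ℝ → ℝ)
    (hc0 : ∀ t c : ℝ,
      uN c + β * cbarI * I t * c * (1 - 0) * (VI t - V0 t)
          + (-γ * 0) * (V1 t - (2 * V0 t - V1 t)) / 2
        ≤ uN (c0 t) + β * cbarI * I t * c0 t * (1 - 0) * (VI t - V0 t)
          + (-γ * 0) * (V1 t - (2 * V0 t - V1 t)) / 2)
    (hc1 : ∀ t c : ℝ,
      uN c + β * cbarI * I t * c * (1 - 1) * (VI t - V1 t)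
          + (-γ * 1) * ((2 * V1 t - V0 t) - V0 t) / 2
        ≤ uN (c1 t) + β * cbarI * I t * c1 t * (1 - 1) * (VI t - V1 t)
          + (-γ * 1) * ((2 * V1 t - V0 t) - V0 t) / 2) :
    (∀ t c : ℝ,
      uN c + β * cbarI * c * I t * (VI t - V0 t)
        ≤ uN (c0 t) + β * cbarI * c0 t * I t * (VI t - V0 t)) ∧
    (∀ t : ℝ, uN (c1 t) = ubarN) ∧
    (∀ t : ℝ, α * (V1 t - 2 * V0 t + (2 * V0 t - V1 t)) / 2 = 0 ∧
      α * ((2 * V1 t - V0 t) - 2 * V1 t + V0 t) / 2 = 0) ∧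
    (((∀ t : ℝ, HasDerivAt V0
          (-uN (c0 t) + β * cbarI * I t * c0 t * (1 - 0) * (V0 t - VI t)
            - (-γ * 0) * (V1 t - (2 * V0 t - V1 t)) / 2
            - α * (V1 t - 2 * V0 t + (2 * V0 t - V1 t)) / 2) t) ∧
        (∀ t : ℝ, HasDerivAt V1
          (-uN (c1 t) + β * cbarI * I t * c1 t * (1 - 1) * (V1 t - VI t)
            - (-γ * 1) * ((2 * V1 t - V0 t) - V0 t) / 2
            - α * ((2 * V1 t - V0 t) - 2 * V1 t + V0 t) / 2) t) ∧
        (∀ t : ℝ, HasDerivAt VI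
          (-ubarI + μ * (VI t - V1 t) + δ * (VI t - ΨD)) t))
      ↔
      ((∀ t : ℝ, HasDerivAt V0
          (-uN (c0 t) + β * cbarI * c0 t * I t * (V0 t - VI t)) t) ∧
        (∀ t : ℝ, HasDerivAt V1 (-ubarN + γ * (V1 t - V0 t)) t) ∧
        (∀ t : ℝ, HasDerivAt VI
          (-ubarI + μ * (VI t - V1 t) + δ * (VI t - ΨD)) t))) := by
  have hc1' : ∀ t : ℝ, uN (c1 t) = ubarN := by
    intro t
    have h := hc1 t cbarN
    have h2 : uN cbarN ≤ uN (c1 t) := by nlinarith [h]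
    exact le_antisymm (hmax _) (hattain ▸ h2)
  refine ⟨?_, hc1', ?_, ?_⟩
  · intro t c
    have h := hc0 t c
    nlinarith [h]
  · intro t; constructor <;> ring
  · constructor <;> rintro ⟨h0, h1, hI⟩ <;> refine ⟨?_, ?_, hI⟩
    · intro t; have := h0 t
      convert this using 1; ring
    · intro t; have := h1 t
      convert this using 1; rw [hc1' t]; ring
    · intro t; have := h0 t
      convert this using 1; ring
    · intro t; have := h1 t
      convert this using 1; rw [hc1' t]; ring
end

section
/- Let t ∈ ℝ, let C ⊆ ℝ be a nonempty compact set, u : ℝ → ℝ continuous, λ ≥ 0 a real constant, and V, W : ℝ → ℝ with W continuous at t and V continuous at t from the right. Let r : ℝ → ℝ with r(τ)/τ → 0 as τ → 0⁺, and suppose that for all sufficiently small τ > 0, V(t) = sup_{c ∈ C} [ u(c)·τ + λ·c·τ·W(t + τ) + (1 − λ·c·τ)·V(t + τ) ] + r(τ). Then V has a right derivative at t (a derivative within [t,∞)) equal to −sup_{c ∈ C} [ u(c) + λ·c·(W(t) − V(t)) ]. -/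
open Filter Set Topology

/-!
Writing `a τ := W (t + τ) - V (t + τ)`, the quantity maximized in the recursion is the affine
function `x ↦ τ x + V (t + τ)` of `u c + λ c (a τ)`, so the recursion reads
`V t = τ S (a τ) + V (t + τ) + r τ` with `S a := sup_{c ∈ C} (u c + λ c a)`.
The difference quotient of `V` at `t` is therefore `-S (a τ) - r τ / τ`, and `S` is continuous
because `C` is compact, so it tends to `-S (W t - V t)`.
-/

theorem sSup_image_mul_add {α : Type*} {s : Set α} (hs : s.Nonempty) {f : α → ℝ}
    (hf : BddAbove (f '' s)) {a : ℝ} (ha : 0 ≤ a) (b : ℝ) :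
    sSup ((fun x => a * f x + b) '' s) = a * sSup (f '' s) + b := by
  rw [← image_image (fun y => a * y + b) f]
  exact ((monotone_id.const_mul ha).add_const b |>.map_csSup_of_continuousAt
    (by fun_prop) (hs.image f) hf).symm

theorem map_add_left_nhdsGT_zero (x : ℝ) : map (x + ·) (𝓝[>] 0) = 𝓝[>] x := by
  simp

theorem hasDerivWithinAt_Ici_of_eventually_eq_mul_add {f g r : ℝ → ℝ} {x L : ℝ}
    (hg : Tendsto g (𝓝[>] 0) (𝓝 L)) (hr : Tendsto (fun τ => r τ / τ) (𝓝[>] 0) (𝓝 0))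
    (h : ∀ᶠ τ in 𝓝[>] 0, f x = τ * g τ + f (x + τ) + r τ) :
    HasDerivWithinAt f (-L) (Ici x) x := by
  rw [← hasDerivWithinAt_Ioi_iff_Ici, hasDerivWithinAt_iff_tendsto_slope' self_notMem_Ioi,
    ← map_add_left_nhdsGT_zero, tendsto_map'_iff]
  have hslope : (fun τ => -g τ - r τ / τ) =ᶠ[𝓝[>] 0] slope f x ∘ (x + ·) := by
    filter_upwards [h, self_mem_nhdsWithin] with τ hτ (hpos : 0 < τ)
    rw [Function.comp_apply, slope_def_field, add_sub_cancel_left, hτ]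
    field_simp
    ring
  simpa using (hg.neg.sub hr).congr' hslope

theorem dp_recursion_susceptible_right_deriv_general
    (t : ℝ) (C : Set ℝ) (hC : C.Nonempty) (hCcomp : IsCompact C)
    (u : ℝ → ℝ) (hu : Continuous u) (lam : ℝ)
    (V W : ℝ → ℝ) (hW : ContinuousAt W t)
    (hV : ContinuousWithinAt V (Set.Ici t) t)
    (r : ℝ → ℝ) (hr : Tendsto (fun τ => r τ / τ) (𝓝[>] (0 : ℝ)) (𝓝 0))
    (hrec : ∀ᶠ τ in 𝓝[>] (0 : ℝ),
      V t = sSup ((fun c =>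
          u c * τ + lam * c * τ * W (t + τ) + (1 - lam * c * τ) * V (t + τ)) '' C)
        + r τ) :
    HasDerivWithinAt V
      (-sSup ((fun c => u c + lam * c * (W t - V t)) '' C)) (Set.Ici t) t := by
  set S : ℝ → ℝ := fun a => sSup ((fun c => u c + lam * c * a) '' C)
  have hS : Continuous S := hCcomp.continuous_sSup (by fun_prop)
  have hshift : Tendsto (t + ·) (𝓝[>] 0) (𝓝[>] t) := (map_add_left_nhdsGT_zero t).le
  have hWV : Tendsto (fun τ => W (t + τ) - V (t + τ)) (𝓝[>] 0) (𝓝 (W t - V t)) :=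
    ((hW.mono_left nhdsWithin_le_nhds).sub (hV.mono Ioi_subset_Ici_self)).comp hshift
  refine hasDerivWithinAt_Ici_of_eventually_eq_mul_add ((hS.tendsto _).comp hWV) hr ?_
  filter_upwards [hrec, self_mem_nhdsWithin] with τ hτ (hpos : 0 < τ)
  have hbdd : BddAbove ((fun c => u c + lam * c * (W (t + τ) - V (t + τ))) '' C) :=
    (hCcomp.image (by fun_prop)).bddAbove
  rw [hτ, Function.comp_apply, ← sSup_image_mul_add hC hbdd hpos.le]
  congr 3
  ext c
  ring

/-- The dynamic-programming recursion with maximization over a compact set of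
contact rates,
`V(t) = sup_{c ∈ C} [u(c)τ + λcτ·W(t+τ) + (1-λcτ)·V(t+τ)] + o(τ)`,
yields the Hamilton–Jacobi ODE
`V' = -sup_{c ∈ C} [u(c) + λc(W - V)]` as a right derivative at `t`. -/
theorem dp_recursion_susceptible_right_deriv
    (t : ℝ) (C : Set ℝ) (hC : C.Nonempty) (hCcomp : IsCompact C)
    (u : ℝ → ℝ) (hu : Continuous u) (lam : ℝ) (hlam : 0 ≤ lam)
    (V W : ℝ → ℝ) (hW : ContinuousAt W t)
    (hV : ContinuousWithinAt V (Set.Ici t) t)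
    (r : ℝ → ℝ) (hr : Tendsto (fun τ => r τ / τ) (𝓝[>] (0 : ℝ)) (𝓝 0))
    (hrec : ∀ᶠ τ in 𝓝[>] (0 : ℝ),
      V t = sSup ((fun c =>
          u c * τ + lam * c * τ * W (t + τ) + (1 - lam * c * τ) * V (t + τ)) '' C)
        + r τ) :
    HasDerivWithinAt V
      (-sSup ((fun c => u c + lam * c * (W t - V t)) '' C)) (Set.Ici t) t :=
  dp_recursion_susceptible_right_deriv_general t C hC hCcomp u hu lam V W hW hV r hr hrec
end
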